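/- arXiv:1505.01352 — 2 statements merged into one kernel-verified Lean document; each statement's English description precedes it below -/
import Mathlib

section
/- Let G be a finite Camina group, i.e., G has a normal subgroup H with {e} < H < G such that every coset Hx with x ∉ H is contained in a conjugacy class of G. Then G is a generalized B-group: no proper central S-ring over G is primitive. In fact, every primitive central S-ring over G is trivial (has rank 2). -/
open scoped Pointwise

/-- The sum `X̲ = ∑_{x ∈ X} x` of a subset `X` of `G`, as an element of the
integral group ring `ℤG = MonoidAlgebra ℤ G`. -/
noncomputable def clsSum {G : Type*} [Group G] [DecidableEq G] (X : Finset G) : MonoidAlgebra ℤ G :=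
  ∑ x ∈ X, MonoidAlgebra.single x 1

/-- A Schur ring (S-ring) over a finite group `G`: a partition `S` of `G` into nonempty
classes such that `{1} ∈ S`, `S` is closed under taking inverses of classes, and the
`ℤ`-span of the class sums is closed under multiplication (hence a subring of `ℤG`). -/
structure SRing (G : Type*) [Group G] [Fintype G] [DecidableEq G] where
  S : Finset (Finset G)
  nonempty_mem : ∀ X ∈ S, X.Nonempty
  cover : ∀ g : G, ∃! X : Finset G, X ∈ S ∧ g ∈ X
  one_mem : ({1} : Finset G) ∈ S
  inv_mem : ∀ X ∈ S, X⁻¹ ∈ S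
  mul_closed : ∀ ξ η : MonoidAlgebra ℤ G,
    ξ ∈ Submodule.span ℤ (clsSum '' (S : Set (Finset G))) →
    η ∈ Submodule.span ℤ (clsSum '' (S : Set (Finset G))) →
    ξ * η ∈ Submodule.span ℤ (clsSum '' (S : Set (Finset G)))

namespace SRing

variable {G : Type*} [Group G] [Fintype G] [DecidableEq G]

/-- The underlying `ℤ`-module of the S-ring `A` inside `ℤG`. -/
noncomputable def span (A : SRing G) : Submodule ℤ (MonoidAlgebra ℤ G) :=
  Submodule.span ℤ (clsSum '' (A.S : Set (Finset G)))

/-- An S-ring is central if it is contained in the center of `ℤG`. -/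
def IsCentral (A : SRing G) : Prop :=
  ∀ ξ ∈ A.span, ∀ η : MonoidAlgebra ℤ G, ξ * η = η * ξ

/-- A set `T ⊆ G` is an `A`-set if it is a union of basic sets of `A`. -/
def IsASet (A : SRing G) (T : Set G) : Prop :=
  ∀ X ∈ A.S, (∃ x ∈ X, x ∈ T) → ∀ x ∈ X, x ∈ T

/-- An S-ring is primitive if its only `A`-subgroups are trivial. -/
def IsPrimitive (A : SRing G) : Prop :=
  ∀ H : Subgroup G, A.IsASet (H : Set G) → H = ⊥ ∨ H = ⊤

end SRing

/-- The conjugacy class of `g` in `G`, as a finset. -/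
def conjClass {G : Type*} [Group G] [Fintype G] [DecidableEq G] (g : G) : Finset G :=
  Finset.univ.filter (fun h => ∃ c : G, c * g * c⁻¹ = h)

/-- The partition of `G` into conjugacy classes; it is the basic-set partition of the
full center `Z(ℤG)` viewed as an S-ring. -/
def classPartition (G : Type*) [Group G] [Fintype G] [DecidableEq G] : Finset (Finset G) :=
  Finset.univ.image (fun g : G => conjClass g)

/-- The basic-set partition `{{e}, G \ {e}}` of the trivial S-ring over `G`. -/
def trivialPartition (G : Type*) [Group G] [Fintype G] [DecidableEq G] : Finset (Finset G) :=
  {({1} : Finset G), Finset.univ \ {1}}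

/-- A central S-ring is proper if it lies strictly between `Z(ℤG)` and the trivial
S-ring, i.e. its partition is neither the conjugacy class partition nor the trivial one. -/
def SRing.IsProper {G : Type*} [Group G] [Fintype G] [DecidableEq G] (A : SRing G) : Prop :=
  A.IsCentral ∧ A.S ≠ classPartition G ∧ A.S ≠ trivialPartition G

/-- `G` is a generalized B-group if no proper central S-ring over `G` is primitive. -/
def IsGeneralizedBGroup (G : Type*) [Group G] [Fintype G] [DecidableEq G] : Prop :=
  ∀ A : SRing G, A.IsProper → ¬ A.IsPrimitive

/-!
Let `A` be a central primitive S-ring over `G`. Its basic sets are closed under conjugation, so by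
the Camina condition `H(X \ H) = X \ H` for every basic set `X`. The stabilizer of a basic set
`X ≠ {e}` is an `A`-subgroup (the structure constant of `X̲ X̲⁻¹` at `g` is `|X ∩ gX|`) other
than `G`, hence trivial. Consequently every basic set meets `H` (otherwise `H` stabilizes it), and
no basic set `Z ≠ {e}` lies in `H`: otherwise `Z ⊆ tX⁻¹` for `t ∈ X \ H`, and constancy of the
structure constant of `Z̲ X̲` on `X` makes `Z⁻¹` stabilize `X`.

Now fix a basic set `X ≠ {e}` and put `P = X ∩ H`, `Q = X \ H ≠ ∅`. For every `g` we have
`|X ∩ gX| ≥ |P ∩ gP| + |Q|`: for `g ∈ H` because `gQ = Q`, and for `g ∉ H` because `|X ∩ gX|`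
takes the same value at some element of `H` in the basic set of `g`. Summing over `g` gives
`|P|² + |G||Q| ≤ |X|²`, i.e. `|G| ≤ 2|P| + |Q| ≤ 2|X|`. Two distinct basic sets `≠ {e}` cannot
both be that large, so `A` is the trivial S-ring.
-/

open Finset MulAction

section

variable {G : Type*} [Group G] [DecidableEq G]

lemma coeff_clsSum (X : Finset G) (g : G) :
    (clsSum X).coeff g = if g ∈ X then 1 else 0 := by
  simp [clsSum, Finsupp.single_apply]

lemma coeff_clsSum_mul_clsSum (X Y : Finset G) (g : G) :
    (clsSum X * clsSum Y).coeff g = X.convolution Y g := by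
  rw [← card_inter_smul_inv, clsSum, sum_mul, MonoidAlgebra.coeff_sum, Finsupp.finsetSum_apply]
  simp only [MonoidAlgebra.coeff_single_mul_apply, coeff_clsSum, one_mul]
  rw [sum_boole]
  congr 2
  ext x
  simp [← inv_smul_mem_iff]

end

namespace Finset

variable {G : Type*} [Group G] [DecidableEq G]

lemma mem_smul_finset_inv_iff {X : Finset G} {x z : G} : z ∈ x • X⁻¹ ↔ z⁻¹ * x ∈ X := by
  simp [← inv_smul_mem_iff]

lemma card_filter_inter_smul_add_card_filter_not_le {X : Finset G} {g : G} (p : G → Prop)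
    [DecidablePred p] (hX : ∀ x ∈ X, ¬p x → g⁻¹ * x ∈ X) :
    #({x ∈ X | p x} ∩ g • {x ∈ X | p x}) + #{x ∈ X | ¬p x} ≤ #(X ∩ g • X) := by
  rw [← card_union_of_disjoint]
  · refine card_le_card (union_subset ?_ fun x hx => ?_)
    · exact inter_subset_inter (filter_subset _ _)
        (smul_finset_subset_smul_finset (filter_subset _ _))
    · obtain ⟨hxX, hx⟩ := mem_filter.mp hx
      exact mem_inter.mpr ⟨hxX, inv_smul_mem_iff.mp (hX x hxX hx)⟩
  · exact disjoint_left.mpr fun x hx hx' =>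
      (mem_filter.mp hx').2 (mem_filter.mp (mem_inter.mp hx).1).2

lemma sum_card_inter_smul_self [Fintype G] (S : Finset G) :
    ∑ g : G, #(S ∩ g • S) = #S ^ 2 := by
  simp_rw [card_inter_smul, convolution]
  rw [sum_card_fiberwise_eq_card_filter]
  simp [sq]

end Finset

/-- The Camina condition on `H`; `(G, H)` is a Camina pair when `H` is moreover normal. -/
def Subgroup.IsCamina {G : Type*} [Group G] (H : Subgroup G) : Prop :=
  ∀ x : G, x ∉ H → ∀ h ∈ H, IsConj x (h * x)

namespace SRing

section

variable {G : Type*} [Group G] [Fintype G] [DecidableEq G] (A : SRing G)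
  {X Y W : Finset G} {x y : G}

lemma eq_of_mem_of_mem (hX : X ∈ A.S) (hY : Y ∈ A.S) (hxX : x ∈ X) (hxY : x ∈ Y) : X = Y :=
  (A.cover x).unique ⟨hX, hxX⟩ ⟨hY, hxY⟩

lemma exists_mem (x : G) : ∃ X ∈ A.S, x ∈ X :=
  (A.cover x).exists

lemma one_notMem (hX : X ∈ A.S) (hX1 : X ≠ {1}) : (1 : G) ∉ X :=
  fun h => hX1 (A.eq_of_mem_of_mem hX A.one_mem h (mem_singleton_self 1))

lemma clsSum_mem_span (hX : X ∈ A.S) : clsSum X ∈ A.span :=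
  Submodule.subset_span ⟨X, hX, rfl⟩

lemma coeff_eq_of_mem_span {ξ : MonoidAlgebra ℤ G} (hξ : ξ ∈ A.span) (hW : W ∈ A.S)
    (hx : x ∈ W) (hy : y ∈ W) : ξ.coeff x = ξ.coeff y := by
  induction hξ using Submodule.span_induction with
  | mem ζ hζ =>
    obtain ⟨X, hX, rfl⟩ := hζ
    have hxy : x ∈ X ↔ y ∈ X :=
      ⟨fun h => A.eq_of_mem_of_mem hW hX hx h ▸ hy, fun h => A.eq_of_mem_of_mem hW hX hy h ▸ hx⟩
    simp only [coeff_clsSum, hxy]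
  | zero => rfl
  | add _ _ _ _ h₁ h₂ => simp [h₁, h₂]
  | smul _ _ _ h => rw [MonoidAlgebra.coeff_smul, Finsupp.smul_apply, Finsupp.smul_apply, h]

lemma card_inter_smul_eq (hX : X ∈ A.S) (hY : Y ∈ A.S) (hW : W ∈ A.S) (hx : x ∈ W)
    (hy : y ∈ W) : #(X ∩ x • Y) = #(X ∩ y • Y) := by
  have hmul := A.mul_closed _ _ (A.clsSum_mem_span hX) (A.clsSum_mem_span (A.inv_mem Y hY))
  have := A.coeff_eq_of_mem_span hmul hW hx hy
  rwa [coeff_clsSum_mul_clsSum, coeff_clsSum_mul_clsSum, Nat.cast_inj, ← card_inter_smul_inv,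
    ← card_inter_smul_inv, inv_inv] at this

lemma subset_smul_iff (hX : X ∈ A.S) (hY : Y ∈ A.S) (hW : W ∈ A.S) (hx : x ∈ W)
    (hy : y ∈ W) : X ⊆ x • Y ↔ X ⊆ y • Y := by
  have key : ∀ z : G, X ⊆ z • Y ↔ #(X ∩ z • Y) = #X := fun z => by
    rw [← inter_eq_left]
    exact ⟨fun h => by rw [h], fun h => eq_of_subset_of_card_le inter_subset_left h.ge⟩
  rw [key, key, A.card_inter_smul_eq hX hY hW hx hy]

lemma isASet_stabilizer (hX : X ∈ A.S) : A.IsASet (stabilizer G X) := by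
  rintro W hW ⟨w, hwW, hw⟩ x hxW
  rw [SetLike.mem_coe, mem_stabilizer_finset_iff_subset_smul_finset] at hw ⊢
  exact (A.subset_smul_iff hX hX hW hxW hwW).mpr hw

lemma stabilizer_ne_top (hX : X ∈ A.S) (hX1 : X ≠ {1}) : stabilizer G X ≠ ⊤ := by
  intro htop
  obtain ⟨x, hx⟩ := A.nonempty_mem X hX
  have hx' : x⁻¹ ∈ stabilizer G X := htop ▸ Subgroup.mem_top _
  exact A.one_notMem hX hX1 (by simpa using mem_stabilizer_finset'.mp hx' hx)

lemma IsPrimitive.stabilizer_eq_bot {A : SRing G} (hp : A.IsPrimitive) (hX : X ∈ A.S)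
    (hX1 : X ≠ {1}) : stabilizer G X = ⊥ :=
  (hp _ (A.isASet_stabilizer hX)).resolve_right (A.stabilizer_ne_top hX hX1)

lemma IsCentral.conj_mem {A : SRing G} (hc : A.IsCentral) (hX : X ∈ A.S) (hx : x ∈ X)
    (c : G) : c * x * c⁻¹ ∈ X := by
  have := congrArg (MonoidAlgebra.coeff · (c * x))
    (hc _ (A.clsSum_mem_span hX) (MonoidAlgebra.single c 1))
  simp only [MonoidAlgebra.coeff_mul_single_apply, MonoidAlgebra.coeff_single_mul_apply,
    coeff_clsSum, inv_mul_cancel_left, hx] at this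
  by_contra h
  simp [h] at this

lemma eq_of_two_mul_card_ge (hX : X ∈ A.S) (hY : Y ∈ A.S) (hX1 : X ≠ {1}) (hY1 : Y ≠ {1})
    (hXc : Fintype.card G ≤ 2 * #X) (hYc : Fintype.card G ≤ 2 * #Y) : X = Y := by
  by_contra hXY
  have hdisj : Disjoint X Y :=
    disjoint_left.mpr fun x hxX hxY => hXY (A.eq_of_mem_of_mem hX hY hxX hxY)
  have : #X + #Y < Fintype.card G := by
    rw [← card_union_of_disjoint hdisj]
    exact card_lt_univ_of_notMem (x := 1)
      (by simp [A.one_notMem hX hX1, A.one_notMem hY hY1])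
  omega

lemma S_eq_trivialPartition [Nontrivial G]
    (h : ∀ X ∈ A.S, ∀ Y ∈ A.S, X ≠ {1} → Y ≠ {1} → X = Y) : A.S = trivialPartition G := by
  have hne : ∀ (X : Finset G), ∀ x ∈ X, x ≠ 1 → X ≠ {1} := fun _ _ hx hx1 h1 =>
    hx1 (mem_singleton.mp (h1 ▸ hx))
  obtain ⟨g, hg⟩ := exists_ne (1 : G)
  obtain ⟨X₀, hX₀, hgX₀⟩ := A.exists_mem g
  have hX₀1 := hne X₀ g hgX₀ hg
  have hX₀_eq : X₀ = univ \ {1} := by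
    ext x
    simp only [mem_sdiff, mem_univ, mem_singleton, true_and]
    refine ⟨fun hx hx1 => A.one_notMem hX₀ hX₀1 (hx1 ▸ hx), fun hx1 => ?_⟩
    obtain ⟨X, hX, hxX⟩ := A.exists_mem x
    exact h X hX X₀ hX₀ (hne X x hxX hx1) hX₀1 ▸ hxX
  ext X
  simp only [trivialPartition, mem_insert, mem_singleton, ← hX₀_eq]
  refine ⟨fun hX => ?_, ?_⟩
  · by_cases hX1 : X = {1}
    · exact .inl hX1
    · exact .inr (h X hX X₀ hX₀ hX1 hX₀1)
  · rintro (rfl | rfl)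
    exacts [A.one_mem, hX₀]

end

section Camina

variable {G : Type*} [Group G] [Fintype G] [DecidableEq G] {A : SRing G} {H : Subgroup G}
  {X Z : Finset G}

lemma IsCentral.mul_mem_of_isCamina (hc : A.IsCentral) (hH : H.IsCamina) (hX : X ∈ A.S)
    {x h : G} (hx : x ∈ X) (hxH : x ∉ H) (hh : h ∈ H) : h * x ∈ X := by
  obtain ⟨c, hcx⟩ := isConj_iff.mp (hH x hxH h hh)
  exact hcx ▸ hc.conj_mem hX hx c

lemma exists_mem_of_isCamina (hc : A.IsCentral) (hp : A.IsPrimitive) (hbot : H ≠ ⊥)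
    (hH : H.IsCamina) (hX : X ∈ A.S) : ∃ x ∈ X, x ∈ H := by
  by_contra! hXH
  have hX1 : X ≠ {1} := by
    rintro rfl
    exact hXH 1 (mem_singleton_self 1) H.one_mem
  refine hbot (eq_bot_iff.mpr fun h hh => ?_)
  rw [← hp.stabilizer_eq_bot hX hX1]
  exact mem_stabilizer_finset'.mpr fun x hx => hc.mul_mem_of_isCamina hH hX hx (hXH x hx) hh

lemma exists_notMem_of_isCamina (hc : A.IsCentral) (hp : A.IsPrimitive) (htop : H ≠ ⊤)
    (hH : H.IsCamina) (hZ : Z ∈ A.S) (hZ1 : Z ≠ {1}) : ∃ z ∈ Z, z ∉ H := by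
  by_contra! hZH
  obtain ⟨t, htH⟩ : ∃ t, t ∉ H := by
    by_contra! h
    exact htop ((Subgroup.eq_top_iff' H).mpr h)
  obtain ⟨X, hX, htX⟩ := A.exists_mem t
  have hX1 : X ≠ {1} := by
    rintro rfl
    exact htH (mem_singleton.mp htX ▸ H.one_mem)
  have hZt : Z ⊆ t • X⁻¹ := fun z hz =>
    mem_smul_finset_inv_iff.mpr <|
      hc.mul_mem_of_isCamina hH hX htX htH (H.inv_mem (hZH z hz))
  obtain ⟨z, hz⟩ := A.nonempty_mem Z hZ
  have hz' : z⁻¹ ∈ stabilizer G X := mem_stabilizer_finset'.mpr fun x hx =>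
    mem_smul_finset_inv_iff.mp ((A.subset_smul_iff hZ (A.inv_mem X hX) hX htX hx).mp hZt hz)
  rw [hp.stabilizer_eq_bot hX hX1, Subgroup.mem_bot, inv_eq_one] at hz'
  exact A.one_notMem hZ hZ1 (hz' ▸ hz)

lemma card_filter_inter_smul_add_card_filter_not_le_of_isCamina (hc : A.IsCentral)
    (hp : A.IsPrimitive) (hbot : H ≠ ⊥) (hH : H.IsCamina) [DecidablePred (· ∈ H)]
    (hX : X ∈ A.S) (g : G) :
    #({x ∈ X | x ∈ H} ∩ g • {x ∈ X | x ∈ H}) + #{x ∈ X | x ∉ H} ≤ #(X ∩ g • X) := by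
  have hle : ∀ h ∈ H,
      #({x ∈ X | x ∈ H} ∩ h • {x ∈ X | x ∈ H}) + #{x ∈ X | x ∉ H} ≤ #(X ∩ h • X) :=
    fun h hh => card_filter_inter_smul_add_card_filter_not_le (· ∈ H) fun x hx hxH =>
      hc.mul_mem_of_isCamina hH hX hx hxH (H.inv_mem hh)
  by_cases hg : g ∈ H
  · exact hle g hg
  obtain ⟨W, hW, hgW⟩ := A.exists_mem g
  obtain ⟨h, hhW, hh⟩ := exists_mem_of_isCamina hc hp hbot hH hW
  have hempty : {x ∈ X | x ∈ H} ∩ g • {x ∈ X | x ∈ H} = ∅ := by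
    refine eq_empty_of_forall_notMem fun x hx => hg ?_
    simp only [mem_inter, mem_filter, ← inv_smul_mem_iff, smul_eq_mul] at hx
    simpa using H.mul_mem hx.1.2 (H.inv_mem hx.2.2)
  rw [hempty, card_empty, zero_add, A.card_inter_smul_eq hX hX hW hgW hhW]
  exact (Nat.le_add_left _ _).trans (hle h hh)

lemma card_le_two_mul_card_of_isCamina (hc : A.IsCentral) (hp : A.IsPrimitive) (hbot : H ≠ ⊥)
    (htop : H ≠ ⊤) (hH : H.IsCamina) (hX : X ∈ A.S) (hX1 : X ≠ {1}) :
    Fintype.card G ≤ 2 * #X := by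
  classical
  set P := {x ∈ X | x ∈ H}
  set Q := {x ∈ X | x ∉ H}
  have hQ : 0 < #Q := by
    obtain ⟨z, hz, hzH⟩ := exists_notMem_of_isCamina hc hp htop hH hX hX1
    exact card_pos.mpr ⟨z, mem_filter.mpr ⟨hz, hzH⟩⟩
  have hPQ : #P + #Q = #X := card_filter_add_card_filter_not _
  have hsum : #P ^ 2 + Fintype.card G * #Q ≤ #X ^ 2 :=
    calc #P ^ 2 + Fintype.card G * #Q = ∑ g : G, (#(P ∩ g • P) + #Q) := by
          simp [sum_add_distrib, sum_card_inter_smul_self]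
      _ ≤ ∑ g : G, #(X ∩ g • X) := sum_le_sum fun g _ =>
          card_filter_inter_smul_add_card_filter_not_le_of_isCamina hc hp hbot hH hX g
      _ = #X ^ 2 := sum_card_inter_smul_self X
  have : Fintype.card G * #Q ≤ 2 * #X * #Q := by nlinarith
  exact Nat.le_of_mul_le_mul_right this hQ

lemma S_eq_trivialPartition_of_isCamina (hc : A.IsCentral) (hp : A.IsPrimitive) (hbot : H ≠ ⊥)
    (htop : H ≠ ⊤) (hH : H.IsCamina) : A.S = trivialPartition G := by
  have : Nontrivial G := by
    obtain ⟨⟨h, _⟩, hh⟩ := Subgroup.ne_bot_iff_exists_ne_one.mp hbot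
    exact nontrivial_of_ne h 1 (by simpa using hh)
  exact A.S_eq_trivialPartition fun X hX Y hY hX1 hY1 =>
    A.eq_of_two_mul_card_ge hX hY hX1 hY1
    (card_le_two_mul_card_of_isCamina hc hp hbot htop hH hX hX1)
    (card_le_two_mul_card_of_isCamina hc hp hbot htop hH hY hY1)

end Camina

end SRing

lemma card_trivialPartition (G : Type*) [Group G] [Fintype G] [DecidableEq G] :
    #(trivialPartition G) = 2 := by
  refine card_pair fun h => ?_
  have h1 : (1 : G) ∈ univ \ {1} := h ▸ mem_singleton_self 1
  simp at h1

theorem camina_isGeneralizedBGroup_general {G : Type*} [Group G] [Fintype G] [DecidableEq G]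
    (H : Subgroup G) (hbot : H ≠ ⊥) (htop : H ≠ ⊤)
    (hCamina : ∀ x : G, x ∉ H → ∀ h ∈ H, ∃ c : G, c * x * c⁻¹ = h * x) :
    (∀ A : SRing G, A.IsCentral → A.IsPrimitive → A.S.card = 2) ∧
      IsGeneralizedBGroup G := by
  have hH : H.IsCamina := fun x hx h hh => isConj_iff.mpr (hCamina x hx h hh)
  refine ⟨fun A hc hp => ?_, fun A hA hp => hA.2.2 ?_⟩
  · rw [SRing.S_eq_trivialPartition_of_isCamina hc hp hbot htop hH, card_trivialPartition]
  · exact SRing.S_eq_trivialPartition_of_isCamina hA.1 hp hbot htop hH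

/-- **Camina groups are generalized B-groups** (Theorem 1.4).
Let `G` be a finite Camina group: there is a normal subgroup `H` with `{e} < H < G`
such that every coset `Hx` with `x ∉ H` is contained in a conjugacy class of `G`
(equivalently, `h * x` is conjugate to `x` for all `h ∈ H`). Then every primitive
central S-ring over `G` is trivial (has rank `2`); in particular `G` is a
generalized B-group. -/
theorem camina_isGeneralizedBGroup {G : Type*} [Group G] [Fintype G] [DecidableEq G]
    (H : Subgroup G) (hnorm : H.Normal) (hbot : H ≠ ⊥) (htop : H ≠ ⊤)
    (hCamina : ∀ x : G, x ∉ H → ∀ h ∈ H, ∃ c : G, c * x * c⁻¹ = h * x) :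
    (∀ A : SRing G, A.IsCentral → A.IsPrimitive → A.S.card = 2) ∧
      IsGeneralizedBGroup G :=
  camina_isGeneralizedBGroup_general H hbot htop hCamina
end

section
/- Let G be a finite group, p a prime not dividing |G|, and X a conjugacy class of G. Then in the group ring ℤG, X̲^p ≡ X^{(p)}̲ (mod p), i.e., every coefficient of the element X̲^p − X^{(p)}̲ is divisible by p. -/
open scoped Pointwise

/-
Expanding `X̲^p`, the coefficient of `y` is the number of `p`-tuples in `X` with product `y`,
and that of `X^{(p)}̲` is the number of `x ∈ X` with `x^p = y` (`x ↦ x^p` is injective as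
`p ∤ |G|`). Rotating a tuple conjugates its product, so `ℤ/p` acts by rotation on the tuples
whose product lies in the class `C` of `y`; its fixed points are the constant tuples, hence
modulo `p` the two counts agree after summing over `C`. Both counts are class functions of `y`,
so the sums are `|C|` times the counts at `y`, and `|C|` is prime to `p` as it divides `|G|`.
-/

open Finset

theorem Finset.sum_pow_eq_sum_piFinset_prod_ofFn {ι R : Type*} [Semiring R] (s : Finset ι)
    (f : ι → R) (n : ℕ) :
    (∑ i ∈ s, f i) ^ n =
      ∑ t ∈ Fintype.piFinset (fun _ : Fin n => s), (List.ofFn fun k => f (t k)).prod := by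
  induction n with
  | zero => simp
  | succ n ih =>
    rw [pow_succ', ih, sum_mul_sum, ← sum_product']
    refine sum_equiv (Fin.consEquiv fun _ => ι) (fun q => ?_) (fun q _ => ?_)
    · simp [Fin.forall_fin_succ]
    · simp [List.ofFn_succ]

theorem MonoidAlgebra.coeff_sum_single_one {R M α : Type*} [Semiring R] [DecidableEq M]
    (s : Finset α) (f : α → M) (m : M) :
    (∑ a ∈ s, single (f a) (1 : R)).coeff m = #{a ∈ s | f a = m} := by
  simp [Finsupp.single_apply]

theorem card_filter_apply_eq_smul {M α β : Type*} [Group M] [MulAction M α] [MulAction M β]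
    [DecidableEq β] {s : Finset α} (hs : ∀ c : M, ∀ a ∈ s, c • a ∈ s) {f : α → β}
    (hf : ∀ (c : M) a, f (c • a) = c • f a) (c : M) (b : β) :
    #{a ∈ s | f a = c • b} = #{a ∈ s | f a = b} := by
  refine card_nbij' (c⁻¹ • ·) (c • ·) (fun a ha => ?_) (fun a ha => ?_) (fun a _ => by simp)
    (fun a _ => by simp)
  · simp only [coe_filter, Set.mem_ofPred_eq] at ha ⊢
    exact ⟨hs _ _ ha.1, by rw [hf, ha.2, inv_smul_smul]⟩
  · simp only [coe_filter, Set.mem_ofPred_eq] at ha ⊢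
    exact ⟨hs _ _ ha.1, by rw [hf, ha.2]⟩

open Fin.NatCast in
theorem Fin.eq_const_of_forall_apply_add_one {α : Type*} {n : ℕ} [NeZero n] {t : Fin n → α}
    (ht : ∀ i, t (i + 1) = t i) : t = fun _ => t 0 := by
  have h (k : ℕ) : t k = t 0 := by
    induction k with
    | zero => simp
    | succ k ih => rw [Nat.cast_succ, ht, ih]
  exact funext fun i => by simpa using h i

open Fin.NatCast in
theorem card_modEq_card_filter_const_mem {α : Type*} [Fintype α] [DecidableEq α] {p : ℕ}
    [Fact p.Prime] (S : Finset (Fin p → α)) (hS : ∀ t ∈ S, (fun i => t (i + 1)) ∈ S) :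
    #S ≡ #{a | (fun _ => a) ∈ S} [MOD p] := by
  let rot : Function.End S := fun t => ⟨fun i => t.1 (i + 1), hS _ t.2⟩
  have hpow (k : ℕ) (t : S) : ((rot ^ k) t).1 = fun i => t.1 (i + k) := by
    induction k generalizing t with
    | zero => simp only [pow_zero, Nat.cast_zero, add_zero]; rfl
    | succ k ih =>
      funext i
      rw [pow_succ']
      change ((rot ^ k) t).1 (i + 1) = _
      rw [ih, Nat.cast_succ, ← add_assoc, add_right_comm]
  have hrot : rot ^ p ^ 1 = 1 := by
    funext t
    refine Subtype.ext ?_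
    rw [pow_one, hpow]
    simp only [Fin.natCast_self, add_zero]
    rfl
  have hconst (t : Function.fixedPoints rot) : t.1.1 = fun _ => t.1.1 0 :=
    Fin.eq_const_of_forall_apply_add_one fun i => congrFun (congrArg Subtype.val t.2) i
  have hfix : #{a | (fun _ => a) ∈ S} = Fintype.card (Function.fixedPoints rot) := by
    rw [← Fintype.card_coe]
    exact Fintype.card_congr
      { toFun := fun a => ⟨⟨fun _ => a, (mem_filter.mp a.2).2⟩, rfl⟩
        invFun := fun t => ⟨t.1.1 0, mem_filter.mpr ⟨mem_univ _, hconst t ▸ t.1.2⟩⟩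
        left_inv := fun a => rfl
        right_inv := fun t => Subtype.ext (Subtype.ext (hconst t).symm) }
  rw [hfix, ← Fintype.card_coe]
  exact Equiv.Perm.card_fixedPoints_modEq hrot

section Conj

variable {G : Type*} [Group G]

theorem isConj_prod_ofFn_rotate {n : ℕ} [NeZero n] (t : Fin n → G) :
    IsConj (List.ofFn t).prod (List.ofFn fun i => t (i + 1)).prod := by
  obtain ⟨n, rfl⟩ := Nat.exists_eq_succ_of_ne_zero (NeZero.ne n)
  refine isConj_iff.mpr ⟨(t 0)⁻¹, ?_⟩
  rw [List.ofFn_succ, List.ofFn_succ', List.prod_cons, List.prod_concat]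
  simp [Fin.coeSucc_eq_succ, Fin.last_add_one]

theorem prod_ofFn_conjAct_smul {n : ℕ} (c : ConjAct G) (t : Fin n → G) :
    (List.ofFn (c • t)).prod = c • (List.ofFn t).prod := by
  change _ = MulDistribMulAction.toMonoidHom G c _
  rw [map_list_prod, List.map_ofFn]
  rfl

variable [Fintype G] [DecidableEq G]

theorem mem_conjClass {g h : G} : h ∈ conjClass g ↔ IsConj g h := by
  simp [conjClass, isConj_iff]

theorem smul_mem_conjClass {g x : G} (c : ConjAct G) (hx : x ∈ conjClass g) :
    c • x ∈ conjClass g :=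
  mem_conjClass.mpr <|
    (mem_conjClass.mp hx).trans (isConj_iff.mpr ⟨_, (ConjAct.smul_def c x).symm⟩)

theorem card_conjClass_dvd_card (g : G) : #(conjClass g) ∣ Fintype.card G := by
  have horbit : (conjClass g : Set G) = MulAction.orbit (ConjAct G) g := by
    ext h; rw [mem_coe, mem_conjClass, ConjAct.mem_orbit_conjAct, isConj_comm]
  rw [← ConjAct.card, ← Nat.card_eq_fintype_card, ← Set.ncard_coe_finset, horbit,
    ← MulAction.index_stabilizer]
  exact Subgroup.index_dvd_card _

theorem card_filter_mem_conjClass {α : Type*} [MulAction (ConjAct G) α] {s : Finset α}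
    (hs : ∀ c : ConjAct G, ∀ a ∈ s, c • a ∈ s) {f : α → G}
    (hf : ∀ (c : ConjAct G) a, f (c • a) = c • f a) (y : G) :
    #{a ∈ s | f a ∈ conjClass y} = #(conjClass y) * #{a ∈ s | f a = y} := by
  rw [card_eq_sum_card_fiberwise (s := {a ∈ s | f a ∈ conjClass y}) (t := conjClass y)
    fun a ha => (mem_filter.mp ha).2, ← smul_eq_mul, ← sum_const]
  refine sum_congr rfl fun z hz => ?_
  obtain ⟨c, rfl⟩ := isConj_iff.mp (mem_conjClass.mp hz)
  rw [filter_filter, ← card_filter_apply_eq_smul hs hf (ConjAct.toConjAct c),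
    ConjAct.toConjAct_smul]
  exact congrArg card (filter_congr fun a _ => and_iff_right_of_imp fun h => h ▸ hz)

theorem card_prod_ofFn_eq_modEq_card_pow_eq {p : ℕ} [Fact p.Prime] {X : Finset G}
    (hX : ∀ c : ConjAct G, ∀ x ∈ X, c • x ∈ X) {y : G} (hy : ¬ p ∣ #(conjClass y)) :
    #{t ∈ Fintype.piFinset fun _ : Fin p => X | (List.ofFn t).prod = y} ≡
      #{x ∈ X | x ^ p = y} [MOD p] := by
  set T := Fintype.piFinset fun _ : Fin p => X
  set S := {t ∈ T | (List.ofFn t).prod ∈ conjClass y}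
  have hT (c : ConjAct G) (t) (ht : t ∈ T) : c • t ∈ T := by
    simp only [T, Fintype.mem_piFinset, Pi.smul_apply] at ht ⊢
    exact fun i => hX c _ (ht i)
  have hS (t) (ht : t ∈ S) : (fun i => t (i + 1)) ∈ S := by
    simp only [S, T, mem_filter, Fintype.mem_piFinset, mem_conjClass] at ht ⊢
    exact ⟨fun i => ht.1 _, ht.2.trans (isConj_prod_ofFn_rotate t)⟩
  have hconst : ({a | (fun _ => a) ∈ S} : Finset G) = {x ∈ X | x ^ p ∈ conjClass y} := by
    ext x; simp [S, T]
  have hmod := card_modEq_card_filter_const_mem S hS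
  rw [hconst, card_filter_mem_conjClass hT prod_ofFn_conjAct_smul,
    card_filter_mem_conjClass (f := (· ^ p)) hX (fun c x => (smul_pow' c x p).symm)] at hmod
  exact Nat.ModEq.cancel_left_of_coprime ((Nat.Prime.coprime_iff_not_dvd Fact.out).mpr hy) hmod

end Conj

section ClassSum

variable {G : Type*} [Group G] [DecidableEq G]

theorem coeff_clsSum_pow (X : Finset G) (n : ℕ) (y : G) :
    (clsSum X ^ n).coeff y =
      #{t ∈ Fintype.piFinset fun _ : Fin n => X | (List.ofFn t).prod = y} := by
  have hprod (t : Fin n → G) :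
      (List.ofFn fun k => MonoidAlgebra.single (t k) (1 : ℤ)).prod =
        MonoidAlgebra.single (List.ofFn t).prod 1 := by
    simpa [List.map_ofFn, Function.comp_def] using
      (map_list_prod (MonoidAlgebra.of ℤ G) (List.ofFn t)).symm
  simp_rw [clsSum, sum_pow_eq_sum_piFinset_prod_ofFn, hprod]
  exact MonoidAlgebra.coeff_sum_single_one ..

theorem coeff_clsSum_image (X : Finset G) {f : G → G} (hf : Set.InjOn f X) (y : G) :
    (clsSum (X.image f)).coeff y = #{x ∈ X | f x = y} := by
  rw [clsSum, sum_image hf]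
  exact MonoidAlgebra.coeff_sum_single_one ..

end ClassSum

/-- If `p` is a prime not dividing `|G|` and `X` is a conjugacy class of `G`, then
`X̲^p ≡ X^{(p)}̲ (mod p)` in `ℤG`: every coefficient of `X̲^p − X^{(p)}̲` is divisible
by `p`. -/
theorem classSum_pow_congruent {G : Type*} [Group G] [Fintype G] [DecidableEq G]
    (p : ℕ) (hp : p.Prime) (hnd : ¬ p ∣ Fintype.card G)
    (X : Finset G) (hX : ∃ g : G, X = conjClass g) :
    ∀ y : G, (p : ℤ) ∣ (clsSum X ^ p - clsSum (X.image (fun x => x ^ p))).coeff y := by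
  intro y
  obtain ⟨g, rfl⟩ := hX
  have : Fact p.Prime := ⟨hp⟩
  have hcop : (Nat.card G).Coprime p := by
    rwa [Nat.card_eq_fintype_card, Nat.coprime_comm, hp.coprime_iff_not_dvd]
  have hinj : Function.Injective fun x : G => x ^ p := (powCoprime hcop).injective
  have hy : ¬ p ∣ #(conjClass y) := fun h => hnd (h.trans (card_conjClass_dvd_card y))
  rw [MonoidAlgebra.coeff_sub, Finsupp.sub_apply, coeff_clsSum_pow,
    coeff_clsSum_image _ hinj.injOn]
  exact Nat.modEq_iff_dvd.mp
    (card_prod_ofFn_eq_modEq_card_pow_eq (fun c _ => smul_mem_conjClass c) hy).symm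
end
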